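/- Let R ≥ 2 and let G_R be the restricted wreath product (ℤ/Rℤ) ≀ ℤ. Let k be the largest exponent occurring in the prime factorization of R, i.e. k = Finset.sup R.primeFactors (fun p => R.factorization p). Then for every n ≥ 1, every word w ∈ FreeGroup (Fin n) that is an E-type iterated identity of G_R has iterational depth at most k+1 in G_R: G_R has iterational depth at most k+1 with respect to w. -/

import Mathlib

noncomputable section

/-- The verbal map: evaluate `w` with the variable of index `0` set to `x`
and the variable of index `i` set to `f i` for `i ≠ 0`. -/
def verbalMap {n : ℕ} [NeZero n] {G : Type*} [Group G] (w : FreeGroup (Fin n))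
    (f : Fin n → G) : G → G :=
  fun x => FreeGroup.lift (Function.update f 0 x) w

/-- `w` is an E-type (Engel type) iterated identity of `G`. -/
def IsEIteratedIdentity {n : ℕ} [NeZero n] (w : FreeGroup (Fin n)) (G : Type*) [Group G] : Prop :=
  ∀ f : Fin n → G, ∃ d : ℕ, 1 ≤ d ∧ (verbalMap w f)^[d] (f 0) = 1

/-- `G` has iterational depth at most `D` with respect to `w`. -/
def DepthAtMost {n : ℕ} [NeZero n] (w : FreeGroup (Fin n)) (G : Type*) [Group G] (D : ℕ) : Prop :=
  ∀ f : Fin n → G, ∃ d : ℕ, 1 ≤ d ∧ d ≤ D ∧ (verbalMap w f)^[d] (f 0) = 1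

/-- The shift automorphism action of `ℤ` on finitely supported configurations,
`(k • c) i = c (i - k)`, as a homomorphism into the automorphism group. -/
def wreathShift (R : Type*) [AddCommGroup R] :
    Multiplicative ℤ →* MulAut (Multiplicative (ℤ →₀ R)) where
  toFun k := AddEquiv.toMultiplicative
    (Finsupp.domCongr (Equiv.addRight (Multiplicative.toAdd k)) : (ℤ →₀ R) ≃+ (ℤ →₀ R))
  map_one' := by
    refine MulEquiv.ext fun c => Multiplicative.toAdd.injective (Finsupp.ext fun i => ?_)
    simp [Finsupp.equivMapDomain_apply] <;> rfl
  map_mul' := by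
    intro a b
    refine MulEquiv.ext fun c => Multiplicative.toAdd.injective (Finsupp.ext fun i => ?_)
    simp [Finsupp.equivMapDomain_apply, Equiv.Perm.mul_def, Equiv.symm_trans_apply,
      sub_eq_add_neg, add_comm, add_assoc, add_left_comm]

/-- The restricted wreath product `(ℤ/Rℤ) ≀ ℤ`. -/
abbrev WreathZModZ (R : ℕ) : Type :=
  Multiplicative (ℤ →₀ ZMod R) ⋊[wreathShift (ZMod R)] Multiplicative ℤ


/-!
Write an element of `(ℤ/Rℤ) ≀ ℤ` as a pair `(b, t)` with `b` a Laurent polynomial over `ℤ/Rℤ`,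
so that the shift by `t` is multiplication by `T ^ t`. Since `w` is also an E-type identity of the
quotient `ℤ`, it vanishes on `ℤ`, hence on every quotient of `ℤ`. Maps `a ↦ (B + Q a, t)` form a
subgroup of the functions from the base group, so the verbal map sends `(a, 0)` to `(B + Q a, 0)`,
and the homomorphism `(b, t) ↦ b(1)` onto `ℤ/Rℤ` gives `Q(1) = 0`. Modulo a prime `p ∣ R` the
Laurent polynomials form a domain, and there the requirement that every orbit of `a ↦ B + Q a`
reaches `0` forces `Q ≡ 0`. Thus the radical of `R` divides every coefficient of `Q`, and
`Q ^ k = 0`. Then the `k`-th iterate of `a ↦ B + Q a` is constant, so the orbit of `w(f)` reaches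
`1` within `k` steps.
-/

open Function Multiplicative LaurentPolynomial Finset

theorem FreeGroup.hom_lift_apply {α G H : Type*} [Group G] [Group H] (φ : G →* H) (g : α → G)
    (w : FreeGroup α) : φ (FreeGroup.lift g w) = FreeGroup.lift (φ ∘ g) w :=
  DFunLike.congr_fun (FreeGroup.ext_hom (φ.comp (FreeGroup.lift g)) (FreeGroup.lift (φ ∘ g))
    fun _ => by simp) w

theorem FreeGroup.lift_mul {α A : Type*} [CommGroup A] (g h : α → A) :
    FreeGroup.lift (g * h) = FreeGroup.lift g * FreeGroup.lift h :=
  FreeGroup.ext_hom _ _ fun _ => by simp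

theorem FreeGroup.lift_eq_one_of_surjective {α G H : Type*} [Group G] [Group H]
    {w : FreeGroup α} (π : G →* H) (hπ : Surjective π)
    (h : ∀ g : α → G, FreeGroup.lift g w = 1) (g : α → H) : FreeGroup.lift g w = 1 := by
  obtain ⟨g', rfl⟩ := hπ.comp_left g
  rw [← FreeGroup.hom_lift_apply, h, π.map_one]

theorem MonoidHom.eq_one_of_iterate_ofAdd_one_eq_one {H : Multiplicative ℤ →* Multiplicative ℤ}
    {d : ℕ} (hd : d ≠ 0) (h : H^[d] (ofAdd 1) = 1) : H = 1 := by
  set s := toAdd (H (ofAdd 1))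
  have hiter : ∀ m : ℕ, H^[m] (ofAdd 1) = ofAdd (s ^ m) := by
    intro m
    induction m with
    | zero => simp
    | succ m ih => rw [iterate_succ_apply', ih, H.apply_mint]; simp [pow_succ', s]
  have hs : s = 0 := pow_eq_zero_iff hd |>.mp (by simpa [hiter] using h)
  exact MonoidHom.ext_mint (toAdd.injective hs)

section VerbalMap

variable {n : ℕ} [NeZero n] {G H : Type*} [Group G] [Group H]

theorem verbalMap_update_zero (w : FreeGroup (Fin n)) (f : Fin n → G) (x : G) :
    verbalMap w (update f 0 x) = verbalMap w f := by
  funext y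
  simp [verbalMap]

theorem verbalMap_self (w : FreeGroup (Fin n)) (f : Fin n → G) :
    verbalMap w f (f 0) = FreeGroup.lift f w := by
  simp [verbalMap]

theorem map_verbalMap (π : G →* H) (w : FreeGroup (Fin n)) (f : Fin n → G) (x : G) :
    π (verbalMap w f x) = verbalMap w (π ∘ f) (π x) := by
  rw [verbalMap, FreeGroup.hom_lift_apply, comp_update]
  rfl

variable {w : FreeGroup (Fin n)}

theorem IsEIteratedIdentity.exists_iterate_eq_one (hw : IsEIteratedIdentity w G)
    (f : Fin n → G) (x : G) : ∃ d, 1 ≤ d ∧ (verbalMap w f)^[d] x = 1 := by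
  simpa [verbalMap_update_zero] using hw (update f 0 x)

theorem IsEIteratedIdentity.of_surjective (hw : IsEIteratedIdentity w G) (π : G →* H)
    (hπ : Surjective π) : IsEIteratedIdentity w H := by
  intro f
  obtain ⟨f', rfl⟩ := hπ.comp_left f
  obtain ⟨d, hd, h⟩ := hw f'
  refine ⟨d, hd, ?_⟩
  have hsc : Semiconj π (verbalMap w f') (verbalMap w (π ∘ f')) := map_verbalMap π w f'
  show (verbalMap w (π ∘ f'))^[d] (π (f' 0)) = 1
  rw [← hsc.iterate_right d, h, map_one]

/- Additively, the verbal map of `g` on `ℤ` is `x ↦ c + s x`. Starting at `1` with `c = 0` shows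
`s = 0`; then the verbal map is constant, equal to the value `w(g)`. -/
theorem IsEIteratedIdentity.lift_eq_one_of_int (hw : IsEIteratedIdentity w (Multiplicative ℤ))
    (g : Fin n → Multiplicative ℤ) : FreeGroup.lift g w = 1 := by
  let e : (Fin n → Multiplicative ℤ) →* Multiplicative ℤ :=
    MonoidHom.mk' (fun g => FreeGroup.lift g w) fun g h => by rw [FreeGroup.lift_mul]; rfl
  let H := e.comp (MonoidHom.mulSingle _ 0)
  have hφ : ∀ g x, verbalMap w g x = e g / H (g 0) * H x := fun g x => by
    show e (update g 0 x) = _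
    rw [Pi.update_eq_div_mul_mulSingle, map_mul, map_div]
    rfl
  have hH : H = 1 := by
    obtain ⟨d, hd, h⟩ := hw (Pi.mulSingle 0 (ofAdd 1))
    have hφH : verbalMap w (Pi.mulSingle 0 (ofAdd 1)) = H := funext fun x => by
      simp [hφ, H]
    rw [hφH, Pi.mulSingle_eq_same] at h
    exact MonoidHom.eq_one_of_iterate_ofAdd_one_eq_one (by omega) h
  have hconst : verbalMap w g = fun _ => e g := funext fun x => by simp [hφ, hH]
  obtain ⟨d, hd, h⟩ := hw g
  obtain ⟨d, rfl⟩ := Nat.exists_eq_add_of_le' hd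
  rwa [hconst, iterate_succ_apply'] at h

end VerbalMap

section AffineMap

variable {A : Type*} [CommSemiring A]

theorem affine_iterate (b q c : A) (m : ℕ) :
    (fun a => b + q * a)^[m] c = q ^ m * c + (∑ j ∈ range m, q ^ j) * b := by
  induction m with
  | zero => simp
  | succ m ih => rw [iterate_succ_apply', ih, geom_sum_succ]; ring

theorem map_affine_iterate {B : Type*} [CommSemiring B] (π : A →+* B) (b q c : A) (m : ℕ) :
    π ((fun a => b + q * a)^[m] c) = (fun a => π b + π q * a)^[m] (π c) :=
  Semiconj.iterate_right (fun a => by simp) m c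

theorem exists_le_affine_iterate_eq_zero {b q c : A} {k d : ℕ} (hq : q ^ k = 0)
    (hd : (fun a => b + q * a)^[d] c = 0) : ∃ e ≤ k, (fun a => b + q * a)^[e] c = 0 := by
  rcases le_total d k with hdk | hkd
  · exact ⟨d, hdk, hd⟩
  have hconst : ∀ c', (fun a => b + q * a)^[k] c' = (∑ j ∈ range k, q ^ j) * b := fun c' => by
    rw [affine_iterate, hq, zero_mul, zero_add]
  obtain ⟨e, rfl⟩ := Nat.exists_eq_add_of_le hkd
  refine ⟨k, le_rfl, ?_⟩
  rw [hconst, ← hconst ((fun a => b + q * a)^[e] c), ← iterate_add_apply, hd]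

theorem eq_zero_of_forall_exists_affine_iterate_eq_zero {A B : Type*} [CommRing A] [IsDomain A]
    [Semiring B] [Nontrivial B] (ε : A →+* B) {b q : A} (hq : ε q = 0)
    (h : ∀ c, ∃ d, 1 ≤ d ∧ (fun a => b + q * a)^[d] c = 0) : q = 0 := by
  have hb : b = 0 := by
    obtain ⟨d, -, hd⟩ := h b
    -- the orbit of `b` is the orbit of `0` with its first point removed
    have horbit : (∑ j ∈ range (d + 1), q ^ j) * b = 0 := by
      rw [← hd, affine_iterate, sum_range_succ]; ring
    have hsum : ε (∑ j ∈ range (d + 1), q ^ j) = 1 := by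
      simp [hq, sum_range_succ']
    exact (mul_eq_zero.mp horbit).resolve_left fun h0 => by simp [h0] at hsum
  obtain ⟨d, hd1, hd⟩ := h 1
  rw [affine_iterate, hb, mul_zero, add_zero, mul_one] at hd
  exact pow_eq_zero_iff (by omega) |>.mp hd

end AffineMap

section LaurentZMod

def augmentation (S : Type*) [CommSemiring S] : S[T;T⁻¹] →+* S := eval₂ (RingHom.id S) 1

@[simp] theorem augmentation_T {S : Type*} [CommSemiring S] (n : ℤ) :
    augmentation S (T n) = 1 := by
  simp [augmentation]

@[simp] theorem augmentation_C {S : Type*} [CommSemiring S] (r : S) :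
    augmentation S (C r) = r := by
  simp [augmentation]

abbrev laurentCastHom {R p : ℕ} (h : p ∣ R) : (ZMod R)[T;T⁻¹] →+* (ZMod p)[T;T⁻¹] :=
  AddMonoidAlgebra.mapRingHom ℤ (ZMod.castHom h (ZMod p))

theorem laurentCastHom_surjective {R p : ℕ} (h : p ∣ R) : Surjective (laurentCastHom h) :=
  AddMonoidAlgebra.map_surjective _ (ZMod.ringHom_surjective (ZMod.castHom h (ZMod p)))

theorem augmentation_laurentCastHom {R p : ℕ} (h : p ∣ R) (x : (ZMod R)[T;T⁻¹]) :
    augmentation _ (laurentCastHom h x) = ZMod.castHom h (ZMod p) (augmentation _ x) := by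
  show ((augmentation _).comp (laurentCastHom h)) x =
    ((ZMod.castHom h (ZMod p)).comp (augmentation _)) x
  congr 1
  refine AddMonoidAlgebra.ringHom_ext (fun r => ?_) (fun m => ?_)
  · rw [RingHom.comp_apply, AddMonoidAlgebra.mapRingHom_single, single_eq_C, single_eq_C]
    simp
  · rw [RingHom.comp_apply, AddMonoidAlgebra.mapRingHom_single, map_one, ← T, ← T]
    simp only [RingHom.comp_apply, augmentation_T, map_one]

theorem Nat.dvd_prod_primeFactors_pow_sup {R : ℕ} (hR : R ≠ 0) :
    R ∣ (∏ p ∈ R.primeFactors, p) ^ R.primeFactors.sup fun p => R.factorization p := by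
  conv_lhs => rw [Nat.prod_primeFactors_pow_factorization hR]
  rw [← prod_pow]
  exact prod_dvd_prod_of_dvd _ _ fun p hp =>
    pow_dvd_pow p (le_sup (f := fun p => R.factorization p) hp)

theorem ZMod.prod_primeFactors_dvd_of_castHom_eq_zero {R : ℕ} [NeZero R] (c : ZMod R)
    (hc : ∀ p (hp : p ∈ R.primeFactors),
      ZMod.castHom (Nat.dvd_of_mem_primeFactors hp) (ZMod p) c = 0) :
    ((∏ p ∈ R.primeFactors, p : ℕ) : ZMod R) ∣ c := by
  obtain ⟨c', hc'⟩ : ∏ p ∈ R.primeFactors, p ∣ c.val :=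
    prod_primes_dvd _ (fun p hp => (Nat.prime_of_mem_primeFactors hp).prime) fun p hp => by
      have h := hc p hp
      rwa [← ZMod.natCast_zmod_val c, map_natCast, ZMod.natCast_eq_zero_iff] at h
  exact ⟨c', by rw [← ZMod.natCast_zmod_val c, hc', Nat.cast_mul]⟩

theorem LaurentPolynomial.C_dvd_of_forall_dvd_coeff {S : Type*} [CommSemiring S] {r : S}
    {x : S[T;T⁻¹]} (h : ∀ i, r ∣ x.coeff i) : C r ∣ x := by
  obtain ⟨y, rfl⟩ : x ∈ Set.range (AddMonoidAlgebra.map (AddMonoidHom.mulLeft r)) := by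
    rw [AddMonoidAlgebra.range_map]
    exact fun i => (h i).imp fun _ h => h.symm
  refine ⟨y, ?_⟩
  rw [← smul_eq_C_mul]
  ext i
  rw [AddMonoidAlgebra.coeff_smul, AddMonoidAlgebra.coeff_map]
  rfl

theorem pow_sup_factorization_eq_zero_of_laurentCastHom_eq_zero {R : ℕ} [NeZero R]
    {x : (ZMod R)[T;T⁻¹]}
    (hx : ∀ p (hp : p ∈ R.primeFactors), laurentCastHom (Nat.dvd_of_mem_primeFactors hp) x = 0) :
    x ^ (R.primeFactors.sup fun p => R.factorization p) = 0 := by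
  set k := R.primeFactors.sup fun p => R.factorization p
  have hdvd : C ((∏ p ∈ R.primeFactors, p : ℕ) : ZMod R) ∣ x :=
    C_dvd_of_forall_dvd_coeff fun i =>
      ZMod.prod_primeFactors_dvd_of_castHom_eq_zero _ fun p hp => by
        simpa using congr_arg (fun y => y.coeff i) (hx p hp)
  have hm : ((∏ p ∈ R.primeFactors, p : ℕ) : ZMod R) ^ k = 0 := by
    rw [← Nat.cast_pow, ZMod.natCast_eq_zero_iff]
    exact Nat.dvd_prod_primeFactors_pow_sup (NeZero.ne R)
  simpa only [← map_pow, hm, map_zero, zero_dvd_iff] using pow_dvd_pow_of_dvd hdvd k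

end LaurentZMod

namespace WreathZModZ

variable {R : ℕ}

def mk (b : (ZMod R)[T;T⁻¹]) (t : ℤ) : WreathZModZ R := ⟨ofAdd b.coeff, ofAdd t⟩

theorem exists_mk_eq (g : WreathZModZ R) : ∃ b t, mk b t = g :=
  ⟨AddMonoidAlgebra.ofCoeff (toAdd g.left), toAdd g.right, rfl⟩

theorem wreathShift_ofAdd_coeff (t : ℤ) (b : (ZMod R)[T;T⁻¹]) :
    wreathShift (ZMod R) (ofAdd t) (ofAdd b.coeff) = ofAdd (T t * b).coeff := by
  apply toAdd.injective
  ext i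
  show Finsupp.equivMapDomain (Equiv.addRight t) b.coeff i = (T t * b).coeff i
  rw [Finsupp.equivMapDomain_apply, T, AddMonoidAlgebra.coeff_single_mul_apply, one_mul]
  simp [add_comm]

theorem mk_mul (b₁ b₂ : (ZMod R)[T;T⁻¹]) (t₁ t₂ : ℤ) :
    mk b₁ t₁ * mk b₂ t₂ = mk (b₁ + T t₁ * b₂) (t₁ + t₂) := by
  refine SemidirectProduct.ext ?_ ?_
  · simp [mk, wreathShift_ofAdd_coeff]
  · rfl

@[simp] theorem mk_zero_zero : (mk 0 0 : WreathZModZ R) = 1 := rfl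

theorem mk_inv (b : (ZMod R)[T;T⁻¹]) (t : ℤ) : (mk b t)⁻¹ = mk (-(T (-t) * b)) (-t) := by
  rw [inv_eq_iff_mul_eq_one, mk_mul, mul_neg, ← mul_assoc, ← T_add]
  simp

theorem mk_eq_one_iff {b : (ZMod R)[T;T⁻¹]} {t : ℤ} : mk b t = 1 ↔ b = 0 ∧ t = 0 := by
  simp [mk, SemidirectProduct.ext_iff]

@[simp] theorem rightHom_mk (b : (ZMod R)[T;T⁻¹]) (t : ℤ) :
    SemidirectProduct.rightHom (mk b t) = ofAdd t := rfl

variable (R) in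
def augHom : WreathZModZ R →* Multiplicative (ZMod R) where
  toFun g := ofAdd (augmentation _ (AddMonoidAlgebra.ofCoeff (toAdd g.left)))
  map_one' := by simp
  map_mul' g h := by
    obtain ⟨b₁, t₁, rfl⟩ := exists_mk_eq g
    obtain ⟨b₂, t₂, rfl⟩ := exists_mk_eq h
    rw [mk_mul]
    simp [mk, AddMonoidAlgebra.ofCoeff_coeff]

@[simp] theorem augHom_mk (b : (ZMod R)[T;T⁻¹]) (t : ℤ) :
    augHom R (mk b t) = ofAdd (augmentation _ b) := rfl

variable (R) in
def affineMaps : Subgroup ((ZMod R)[T;T⁻¹] → WreathZModZ R) where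
  carrier := {F | ∃ (B Q : (ZMod R)[T;T⁻¹]) (t : ℤ), ∀ a, F a = mk (B + Q * a) t}
  one_mem' := ⟨0, 0, 0, fun a => by simp⟩
  mul_mem' := by
    rintro F₁ F₂ ⟨B₁, Q₁, t₁, h₁⟩ ⟨B₂, Q₂, t₂, h₂⟩
    exact ⟨B₁ + T t₁ * B₂, Q₁ + T t₁ * Q₂, t₁ + t₂, fun a => by
      simp only [Pi.mul_apply, h₁, h₂, mk_mul]; ring_nf⟩
  inv_mem' := by
    rintro F ⟨B, Q, t, h⟩
    exact ⟨-(T (-t) * B), -(T (-t) * Q), -t, fun a => by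
      simp only [Pi.inv_apply, h, mk_inv]; ring_nf⟩

variable {n : ℕ} [NeZero n] {w : FreeGroup (Fin n)}

theorem verbalMap_mk_mem_affineMaps (w : FreeGroup (Fin n)) (f : Fin n → WreathZModZ R) :
    (fun a => verbalMap w f (mk a 0)) ∈ affineMaps R := by
  let F : Fin n → (ZMod R)[T;T⁻¹] → WreathZModZ R := fun i a => update f 0 (mk a 0) i
  have hF : (fun a => verbalMap w f (mk a 0)) = FreeGroup.lift F w := funext fun a =>
    (FreeGroup.hom_lift_apply (Pi.evalMonoidHom (fun _ => WreathZModZ R) a) F w).symm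
  rw [hF]
  refine FreeGroup.range_lift_le ?_ ⟨w, rfl⟩
  rintro _ ⟨i, rfl⟩
  rcases eq_or_ne i 0 with rfl | hi
  · exact ⟨0, 1, 0, fun a => by simp [F]⟩
  · obtain ⟨b, t, hbt⟩ := exists_mk_eq (f i)
    exact ⟨b, 0, t, fun a => by simp [F, update_of_ne hi, hbt]⟩

theorem exists_verbalMap_mk_eq (hZ : ∀ g : Fin n → Multiplicative ℤ, FreeGroup.lift g w = 1)
    (f : Fin n → WreathZModZ R) : ∃ B Q : (ZMod R)[T;T⁻¹],
      augmentation _ Q = 0 ∧ ∀ a, verbalMap w f (mk a 0) = mk (B + Q * a) 0 := by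
  obtain ⟨B, Q, t, h⟩ := verbalMap_mk_mem_affineMaps (R := R) w f
  have hvanish : ∀ {H : Type} [Group H] (π : WreathZModZ R →* H),
      (∀ g : Fin n → H, FreeGroup.lift g w = 1) → ∀ a, π (mk (B + Q * a) t) = 1 := by
    intro H _ π hπ a
    rw [← h, map_verbalMap]
    exact hπ _
  have ht : t = 0 := by simpa using hvanish SemidirectProduct.rightHom hZ 0
  have hZR := FreeGroup.lift_eq_one_of_surjective (Int.castAddHom (ZMod R)).toMultiplicative
    (fun x => ZMod.intCast_surjective (toAdd x)) hZ
  have haug : ∀ a, augmentation _ B + augmentation _ Q * augmentation _ a = 0 := fun a => by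
    simpa [← ofAdd_add] using hvanish (augHom R) hZR a
  have h0 := haug 0
  have h1 := haug 1
  simp only [map_zero, mul_zero, add_zero, map_one, mul_one] at h0 h1
  exact ⟨B, Q, by rwa [h0, zero_add] at h1, fun a => ht ▸ h a⟩

theorem exists_verbalMap_self_eq_mk
    (hZ : ∀ g : Fin n → Multiplicative ℤ, FreeGroup.lift g w = 1) (f : Fin n → WreathZModZ R) :
    ∃ a, verbalMap w f (f 0) = mk a 0 := by
  obtain ⟨a, t, hat⟩ := exists_mk_eq (verbalMap w f (f 0))
  have ht := hZ (SemidirectProduct.rightHom ∘ f)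
  rw [← FreeGroup.hom_lift_apply, ← verbalMap_self, ← hat, rightHom_mk, ofAdd_eq_one] at ht
  exact ⟨a, by rw [← hat, ht]⟩

theorem verbalMap_iterate_mk {f : Fin n → WreathZModZ R} {B Q : (ZMod R)[T;T⁻¹]}
    (hBQ : ∀ a, verbalMap w f (mk a 0) = mk (B + Q * a) 0) (m : ℕ) (a : (ZMod R)[T;T⁻¹]) :
    (verbalMap w f)^[m] (mk a 0) = mk ((fun a => B + Q * a)^[m] a) 0 :=
  (Semiconj.iterate_right (f := fun a => mk a 0) (fun a => (hBQ a).symm) m a).symm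

theorem pow_sup_factorization_eq_zero_of_isEIteratedIdentity [NeZero R]
    (hw : IsEIteratedIdentity w (WreathZModZ R)) {f : Fin n → WreathZModZ R}
    {B Q : (ZMod R)[T;T⁻¹]} (hQ : augmentation _ Q = 0)
    (hBQ : ∀ a, verbalMap w f (mk a 0) = mk (B + Q * a) 0) :
    Q ^ (R.primeFactors.sup fun p => R.factorization p) = 0 := by
  have horbit : ∀ c, ∃ d, 1 ≤ d ∧ (fun a => B + Q * a)^[d] c = 0 := fun c => by
    obtain ⟨d, hd, h⟩ := hw.exists_iterate_eq_one f (mk c 0)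
    rw [verbalMap_iterate_mk hBQ, mk_eq_one_iff] at h
    exact ⟨d, hd, h.1⟩
  refine pow_sup_factorization_eq_zero_of_laurentCastHom_eq_zero fun p hp => ?_
  have := Fact.mk (Nat.prime_of_mem_primeFactors hp)
  refine eq_zero_of_forall_exists_affine_iterate_eq_zero (augmentation (ZMod p))
    (b := laurentCastHom (Nat.dvd_of_mem_primeFactors hp) B)
    (by rw [augmentation_laurentCastHom, hQ, map_zero]) fun c' => ?_
  obtain ⟨c, rfl⟩ := laurentCastHom_surjective (Nat.dvd_of_mem_primeFactors hp) c'
  obtain ⟨d, hd, h⟩ := horbit c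
  exact ⟨d, hd, by rw [← map_affine_iterate, h, map_zero]⟩

end WreathZModZ

open WreathZModZ in
/-- The iterational depth of `(ℤ/Rℤ) ≀ ℤ` is at most `k + 1`, where `k` is the largest
exponent in the prime factorization of `R`. -/
theorem wreathZModZ_depth_le (R : ℕ) (hR : 2 ≤ R) :
    ∀ (n : ℕ) [NeZero n] (w : FreeGroup (Fin n)),
      IsEIteratedIdentity w (WreathZModZ R) →
        DepthAtMost w (WreathZModZ R)
          (R.primeFactors.sup (fun p => R.factorization p) + 1) := by
  intro n _ w hw f
  have : NeZero R := ⟨by omega⟩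
  have hZ := (hw.of_surjective _ SemidirectProduct.rightHom_surjective).lift_eq_one_of_int
  obtain ⟨B, Q, hQ, hBQ⟩ := exists_verbalMap_mk_eq hZ f
  obtain ⟨a, ha⟩ := exists_verbalMap_self_eq_mk hZ f
  obtain ⟨d, -, hd⟩ := hw.exists_iterate_eq_one f (mk a 0)
  rw [verbalMap_iterate_mk hBQ, mk_eq_one_iff] at hd
  obtain ⟨e, he, hea⟩ := exists_le_affine_iterate_eq_zero
    (pow_sup_factorization_eq_zero_of_isEIteratedIdentity hw hQ hBQ) hd.1
  refine ⟨e + 1, by omega, by omega, ?_⟩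
  rw [iterate_succ_apply, ha, verbalMap_iterate_mk hBQ, hea, mk_zero_zero]
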